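/- Let E be a real normed vector space, X a type, n ≥ 1, φ : X → E a map with ‖φ(x)‖ ≤ B for all x ∈ X (B > 0), and ψ : E → ℝ a linear map that is Lipschitz with constant L > 0. Define the deep-set encoder g(D) = ψ((1/n) • ∑_{i=1}^n φ(D i)) for D : Fin n → X. Let 0 < ε < 1 and 0 < δ < 1, and set σ² = 2 · (2LB/n)² · log(1.25/δ) / ε². Then for any two adjacent datasets D, D' : Fin n → X (i.e., there is an index j with D i = D' i for all i ≠ j) and every measurable set s ⊆ ℝ, the Gaussian measures centered at the encoder outputs satisfy N(g(D), σ²)(s) ≤ e^ε · N(g(D'), σ²)(s) + δ. -/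

import Mathlib

/-!
Replacing one record changes the mean embedding by at most `2B/n`, so the encoder moves by at
most `Δ = 2LB/n`. For Gaussians of variance `σ²` centred at `ν < μ ≤ ν + Δ`, the density ratio
is `p_μ / p_ν = exp (((x - ν)² - (x - μ)²) / 2σ²)`, which exceeds `e^ε` only on the right tail
`x ≥ μ + σ²ε/Δ - Δ/2`; off that tail `p_μ ≤ e^ε p_ν`, and the calibration of `σ²` makes the
tail mass at most `δ`. The case `μ < ν` follows by reflecting `x ↦ -x`.
-/

open MeasureTheory ProbabilityTheory Real Set
open scoped NNReal ENNReal Pointwise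

section DeepSet

variable {X E F : Type*} [SeminormedAddCommGroup E] [SeminormedAddCommGroup F]

lemma norm_sum_sub_sum_le_of_eq_of_ne {ι : Type*} [Fintype ι] {f : X → E} {B : ℝ}
    (hf : ∀ x, ‖f x‖ ≤ B) {D D' : ι → X} {j : ι} (h : ∀ i, i ≠ j → D i = D' i) :
    ‖∑ i, f (D i) - ∑ i, f (D' i)‖ ≤ 2 * B := by
  rw [← Finset.sum_sub_distrib,
    Finset.sum_eq_single j (fun i _ hij ↦ by rw [h i hij, sub_self]) (by simp)]
  linarith [norm_sub_le (f (D j)) (f (D' j)), hf (D j), hf (D' j)]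

noncomputable def deepSet [NormedSpace ℝ E] {n : ℕ} (φ : X → E) (ψ : E → F) (D : Fin n → X) :
    F :=
  ψ ((1 / (n : ℝ)) • ∑ i, φ (D i))

lemma norm_deepSet_sub_le [NormedSpace ℝ E] {n : ℕ} {φ : X → E} {B : ℝ} (hφ : ∀ x, ‖φ x‖ ≤ B)
    {ψ : E → F} {L : ℝ} (hL : 0 ≤ L) (hψ : ∀ u v, ‖ψ u - ψ v‖ ≤ L * ‖u - v‖)
    {D D' : Fin n → X} {j : Fin n} (h : ∀ i, i ≠ j → D i = D' i) :
    ‖deepSet φ ψ D - deepSet φ ψ D'‖ ≤ 2 * L * B / n := by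
  calc ‖deepSet φ ψ D - deepSet φ ψ D'‖
      ≤ L * ((1 / (n : ℝ)) * ‖∑ i, φ (D i) - ∑ i, φ (D' i)‖) := by
        refine (hψ _ _).trans_eq ?_
        rw [← smul_sub, norm_smul, Real.norm_of_nonneg (by positivity)]
    _ ≤ L * ((1 / (n : ℝ)) * (2 * B)) := by
        gcongr
        exact norm_sum_sub_sum_le_of_eq_of_ne hφ h
    _ = 2 * L * B / n := by ring

end DeepSet

lemma withDensity_le_mul_withDensity_add {α : Type*} [MeasurableSpace α] {ρ : Measure α}
    [SFinite ρ] {f g : α → ℝ≥0∞} (hg : Measurable g) (c : ℝ≥0∞) (s : Set α) :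
    ρ.withDensity f s ≤ c * ρ.withDensity g s + ρ.withDensity f {x | c * g x < f x} := by
  set A := {x | c * g x < f x}
  calc ρ.withDensity f s ≤ ρ.withDensity f (s \ A) + ρ.withDensity f A :=
        (measure_mono (by simp)).trans (measure_union_le _ _)
    _ ≤ c * ρ.withDensity g s + ρ.withDensity f A := by
        gcongr
        rw [withDensity_apply' _, withDensity_apply' _]
        calc ∫⁻ x in s \ A, f x ∂ρ ≤ ∫⁻ x in s \ A, c * g x ∂ρ :=
              setLIntegral_mono (hg.const_mul c) fun x hx ↦ not_lt.1 hx.2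
          _ = c * ∫⁻ x in s \ A, g x ∂ρ := lintegral_const_mul c hg
          _ ≤ c * ∫⁻ x in s, g x ∂ρ := by gcongr; exact sdiff_subset

lemma gaussianPDFReal_eq_exp_mul (μ ν : ℝ) (v : ℝ≥0) (x : ℝ) :
    gaussianPDFReal μ v x =
      exp (((x - ν) ^ 2 - (x - μ) ^ 2) / (2 * v)) * gaussianPDFReal ν v x := by
  simp only [gaussianPDFReal]
  rw [mul_left_comm, ← exp_add]
  ring_nf

lemma gaussianPDFReal_le_inv_sqrt (μ : ℝ) (v : ℝ≥0) (x : ℝ) :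
    gaussianPDFReal μ v x ≤ (√(2 * π * v))⁻¹ := by
  rw [gaussianPDFReal]
  refine mul_le_of_le_one_right (by positivity) (exp_le_one_iff.2 ?_)
  rw [neg_div]
  exact neg_nonpos.2 (by positivity)

lemma gaussianReal_Ici_add (μ t : ℝ) (v : ℝ≥0) :
    gaussianReal μ v (Ici (μ + t)) = gaussianReal 0 v (Ici t) := by
  rw [← zero_add μ, ← gaussianReal_map_add_const, Measure.map_apply (measurable_add_const _)
    measurableSet_Ici, preimage_add_const_Ici, zero_add, add_sub_cancel_left]

lemma gaussianReal_Ici_self (μ : ℝ) {v : ℝ≥0} (hv : v ≠ 0) :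
    gaussianReal μ v (Ici μ) = ENNReal.ofReal (1 / 2) := by
  rw [show Ici μ = Ici (μ + 0) by rw [add_zero], gaussianReal_Ici_add,
    gaussianReal_apply_eq_integral _ hv, integral_Ici_eq_integral_Ioi]
  have hpdf : ∀ x, gaussianPDFReal 0 v x = (√(2 * π * v))⁻¹ * exp (-(2 * (v : ℝ))⁻¹ * x ^ 2) :=
    fun x ↦ by rw [gaussianPDFReal]; ring_nf
  simp_rw [hpdf]
  rw [integral_const_mul, integral_gaussian_Ioi, div_inv_eq_mul, mul_comm π]
  congr 1
  field_simp

lemma gaussianReal_neg_apply_neg (μ : ℝ) (v : ℝ≥0) (s : Set ℝ) :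
    gaussianReal (-μ) v (-s) = gaussianReal μ v s := by
  rw [← gaussianReal_map_neg]
  exact ((MeasurableEquiv.neg ℝ).map_apply (-s)).trans (by congr 1; ext; simp)

/- The factor `1/2` matters: the plain Chernoff bound `exp (-t ^ 2 / (2 * v))` is too weak for
the constant `1.25` in the calibration of the Gaussian mechanism. -/
lemma gaussianReal_Ici_add_le_of_nonneg (μ : ℝ) {v : ℝ≥0} (hv : v ≠ 0) {t : ℝ} (ht : 0 ≤ t) :
    gaussianReal μ v (Ici (μ + t)) ≤ ENNReal.ofReal (exp (-t ^ 2 / (2 * v)) / 2) := by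
  have hpdf : ∀ x ∈ Ici (μ + t),
      gaussianPDF μ v x ≤ ENNReal.ofReal (exp (-t ^ 2 / (2 * v))) * gaussianPDF (μ + t) v x := by
    intro x hx
    rw [gaussianPDF, gaussianPDF, ← ENNReal.ofReal_mul (exp_pos _).le,
      gaussianPDFReal_eq_exp_mul μ (μ + t)]
    refine ENNReal.ofReal_le_ofReal (mul_le_mul_of_nonneg_right (exp_le_exp.2 ?_)
      (gaussianPDFReal_nonneg _ _ _))
    gcongr
    nlinarith [mem_Ici.1 hx]
  calc gaussianReal μ v (Ici (μ + t))
      ≤ ∫⁻ x in Ici (μ + t),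
          ENNReal.ofReal (exp (-t ^ 2 / (2 * v))) * gaussianPDF (μ + t) v x := by
        rw [gaussianReal_apply _ hv]
        exact setLIntegral_mono' measurableSet_Ici hpdf
    _ = ENNReal.ofReal (exp (-t ^ 2 / (2 * v))) * ENNReal.ofReal (1 / 2) := by
        rw [lintegral_const_mul _ (measurable_gaussianPDF _ _), ← gaussianReal_apply _ hv,
          gaussianReal_Ici_self _ hv]
    _ = ENNReal.ofReal (exp (-t ^ 2 / (2 * v)) / 2) := by
        rw [← ENNReal.ofReal_mul (exp_pos _).le, mul_one_div]

lemma gaussianReal_Ici_add_le_of_nonpos (μ : ℝ) {v : ℝ≥0} (hv : v ≠ 0) {t : ℝ} (ht : t ≤ 0) :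
    gaussianReal μ v (Ici (μ + t)) ≤ ENNReal.ofReal (1 / 2 + -t / √(2 * π * v)) := by
  have hstrip : gaussianReal μ v (Ico (μ + t) μ) ≤ ENNReal.ofReal (-t / √(2 * π * v)) := by
    calc gaussianReal μ v (Ico (μ + t) μ)
        ≤ ∫⁻ _ in Ico (μ + t) μ, ENNReal.ofReal (√(2 * π * v))⁻¹ := by
          rw [gaussianReal_apply _ hv]
          exact setLIntegral_mono' measurableSet_Ico fun x _ ↦
            ENNReal.ofReal_le_ofReal (gaussianPDFReal_le_inv_sqrt μ v x)
      _ = ENNReal.ofReal (-t / √(2 * π * v)) := by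
          rw [setLIntegral_const, Real.volume_Ico, ← ENNReal.ofReal_mul (by positivity),
            sub_add_cancel_left, div_eq_inv_mul]
  calc gaussianReal μ v (Ici (μ + t))
      ≤ gaussianReal μ v (Ici μ) + gaussianReal μ v (Ico (μ + t) μ) :=
        (measure_mono fun x hx ↦ (le_or_gt μ x).imp id fun hxμ ↦ ⟨hx, hxμ⟩).trans
          (measure_union_le _ _)
    _ ≤ ENNReal.ofReal (1 / 2) + ENNReal.ofReal (-t / √(2 * π * v)) := by
        rw [gaussianReal_Ici_self _ hv]
        gcongr
    _ = ENNReal.ofReal (1 / 2 + -t / √(2 * π * v)) :=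
        (ENNReal.ofReal_add (by norm_num) (div_nonneg (neg_nonneg.2 ht) (sqrt_nonneg _))).symm

lemma setOf_exp_mul_gaussianPDF_lt_subset {μ ν Δ ε : ℝ} {v : ℝ≥0} (hv : v ≠ 0) (hε : 0 ≤ ε)
    (hνμ : ν < μ) (hΔ : μ - ν ≤ Δ) :
    {x | ENNReal.ofReal (exp ε) * gaussianPDF ν v x < gaussianPDF μ v x} ⊆
      Ici (μ + (v * ε / Δ - Δ / 2)) := by
  intro x hx
  have hv' : (0 : ℝ) < v := by positivity
  set d := μ - ν
  have hd0 : 0 < d := sub_pos.2 hνμ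
  have hloss : ε < ((x - ν) ^ 2 - (x - μ) ^ 2) / (2 * v) := by
    rw [mem_ofPred_eq, gaussianPDF, gaussianPDF, ← ENNReal.ofReal_mul (exp_pos _).le,
      ENNReal.ofReal_lt_ofReal_iff', gaussianPDFReal_eq_exp_mul μ ν] at hx
    exact exp_lt_exp.1 (lt_of_mul_lt_mul_right hx.1 (gaussianPDFReal_pos _ _ _ hv).le)
  have hx' : v * ε / d - d / 2 < x - μ := by
    rw [lt_div_iff₀ (by positivity)] at hloss
    rw [sub_lt_iff_lt_add, div_lt_iff₀ hd0]
    nlinarith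
  have hmono : v * ε / Δ ≤ v * ε / d := div_le_div_of_nonneg_left (by positivity) hd0 hΔ
  rw [mem_Ici]
  linarith

section GaussianTailArithmetic

variable {Δ ε r v t : ℝ}

lemma exp_neg_sq_div_two_le (hΔ : 0 < Δ) (hε : 0 < ε) (hε1 : ε < 1) (hr : 0 < r)
    (hv : v = 2 * Δ ^ 2 * r / ε ^ 2) (ht : t = Δ * (4 * r - ε) / (2 * ε)) :
    exp (-t ^ 2 / (2 * v)) / 2 ≤ 1.25 * exp (-r) := by
  have hexponent : -t ^ 2 / (2 * v) ≤ 1 / 2 - r := by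
    rw [hv, ht, div_le_iff₀ (by positivity)]
    field_simp
    nlinarith [sq_nonneg ε]
  have hexp_half : exp (1 / 2) ≤ 2.5 := by
    have hsq : exp (1 / 2) * exp (1 / 2) = exp 1 := by rw [← exp_add]; norm_num
    nlinarith [exp_one_lt_d9, exp_pos (1 / 2)]
  calc exp (-t ^ 2 / (2 * v)) / 2 ≤ exp (1 / 2 - r) / 2 := by gcongr
    _ = exp (1 / 2) / 2 * exp (-r) := by rw [sub_eq_add_neg, exp_add]; ring
    _ ≤ 1.25 * exp (-r) := by gcongr; linarith

lemma half_add_neg_div_sqrt_le (hΔ : 0 < Δ) (hε : 0 < ε) (hε1 : ε < 1) (hr : 1 / 5 ≤ r)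
    (hv : v = 2 * Δ ^ 2 * r / ε ^ 2) (ht : t = Δ * (4 * r - ε) / (2 * ε)) (htneg : t < 0) :
    1 / 2 + -t / √(2 * π * v) ≤ 1.25 * exp (-r) := by
  have h4r : 4 * r < ε := by
    by_contra! h
    have : 0 ≤ t := by rw [ht]; exact div_nonneg (mul_nonneg hΔ.le (by linarith)) (by positivity)
    linarith
  have hstrip : -t / √(2 * π * v) ≤ 1 / 10 := by
    have hsq : (10 * -t) ^ 2 ≤ 2 * π * v := by
      rw [hv, ht]
      field_simp
      nlinarith [pi_gt_three]
    rw [div_le_iff₀ (sqrt_pos.2 (by rw [hv]; positivity))]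
    linarith [le_sqrt_of_sq_le hsq]
  have hexp : 3 / 5 ≤ 1.25 * exp (-r) := by linarith [add_one_le_exp (-r)]
  linarith

end GaussianTailArithmetic

section GaussianMechanism

variable {Δ ε δ : ℝ} {σ2 : ℝ≥0}

lemma one_fifth_le_log_div (hδ : 0 < δ) (hδ1 : δ < 1) : 1 / 5 ≤ log (1.25 / δ) := by
  have : 1 - (1.25 / δ)⁻¹ ≤ log (1.25 / δ) := one_sub_inv_le_log_of_pos (by positivity)
  rw [inv_div] at this
  norm_num at this
  linarith

lemma variance_ne_zero (hΔ : 0 < Δ) (hε : 0 < ε) (hδ : 0 < δ) (hδ1 : δ < 1)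
    (hσ2 : (σ2 : ℝ) = 2 * Δ ^ 2 * log (1.25 / δ) / ε ^ 2) : σ2 ≠ 0 := by
  have hr := one_fifth_le_log_div hδ hδ1
  have : (0 : ℝ) < σ2 := by rw [hσ2]; positivity
  exact_mod_cast this.ne'

lemma gaussianReal_Ici_add_le_of_variance_eq (μ : ℝ) (hΔ : 0 < Δ) (hε : 0 < ε) (hε1 : ε < 1)
    (hδ : 0 < δ) (hδ1 : δ < 1) (hσ2 : (σ2 : ℝ) = 2 * Δ ^ 2 * log (1.25 / δ) / ε ^ 2) :
    gaussianReal μ σ2 (Ici (μ + (σ2 * ε / Δ - Δ / 2))) ≤ ENNReal.ofReal δ := by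
  have hσ2pos := variance_ne_zero hΔ hε hδ hδ1 hσ2
  have hr := one_fifth_le_log_div hδ hδ1
  set r := log (1.25 / δ)
  have hδr : δ = 1.25 * exp (-r) := by
    rw [exp_neg, exp_log (by positivity)]
    field_simp
  have ht : (σ2 : ℝ) * ε / Δ - Δ / 2 = Δ * (4 * r - ε) / (2 * ε) := by
    rw [hσ2]; field_simp; ring
  rw [hδr]
  -- The threshold is negative only in the narrow regime `4 r < ε < 1`, where `δ > 0.9`.
  rcases le_or_gt 0 ((σ2 : ℝ) * ε / Δ - Δ / 2) with h | h
  · exact (gaussianReal_Ici_add_le_of_nonneg μ hσ2pos h).trans <| ENNReal.ofReal_le_ofReal <|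
      exp_neg_sq_div_two_le hΔ hε hε1 (by linarith) hσ2 ht
  · exact (gaussianReal_Ici_add_le_of_nonpos μ hσ2pos h.le).trans <| ENNReal.ofReal_le_ofReal <|
      half_add_neg_div_sqrt_le hΔ hε hε1 hr hσ2 ht h

lemma gaussianReal_le_exp_mul_add_of_lt {μ ν : ℝ} (hνμ : ν < μ) (hd : μ - ν ≤ Δ) (hε : 0 < ε)
    (hε1 : ε < 1) (hδ : 0 < δ) (hδ1 : δ < 1)
    (hσ2 : (σ2 : ℝ) = 2 * Δ ^ 2 * log (1.25 / δ) / ε ^ 2) (s : Set ℝ) :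
    gaussianReal μ σ2 s ≤ ENNReal.ofReal (exp ε) * gaussianReal ν σ2 s + ENNReal.ofReal δ := by
  have hΔ : 0 < Δ := by linarith
  have hσ2pos := variance_ne_zero hΔ hε hδ hδ1 hσ2
  calc gaussianReal μ σ2 s
      ≤ ENNReal.ofReal (exp ε) * gaussianReal ν σ2 s +
          gaussianReal μ σ2
            {x | ENNReal.ofReal (exp ε) * gaussianPDF ν σ2 x < gaussianPDF μ σ2 x} := by
        simp only [gaussianReal_of_var_ne_zero _ hσ2pos]
        exact withDensity_le_mul_withDensity_add (measurable_gaussianPDF _ _) _ s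
    _ ≤ ENNReal.ofReal (exp ε) * gaussianReal ν σ2 s +
          gaussianReal μ σ2 (Ici (μ + (σ2 * ε / Δ - Δ / 2))) := by
        gcongr
        exact setOf_exp_mul_gaussianPDF_lt_subset hσ2pos hε.le hνμ hd
    _ ≤ ENNReal.ofReal (exp ε) * gaussianReal ν σ2 s + ENNReal.ofReal δ := by
        gcongr
        exact gaussianReal_Ici_add_le_of_variance_eq μ hΔ hε hε1 hδ hδ1 hσ2

theorem gaussianReal_le_exp_mul_add {μ ν : ℝ} (hd : |μ - ν| ≤ Δ) (hε : 0 < ε) (hε1 : ε < 1)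
    (hδ : 0 < δ) (hδ1 : δ < 1) (hσ2 : (σ2 : ℝ) = 2 * Δ ^ 2 * log (1.25 / δ) / ε ^ 2)
    (s : Set ℝ) :
    gaussianReal μ σ2 s ≤ ENNReal.ofReal (exp ε) * gaussianReal ν σ2 s + ENNReal.ofReal δ := by
  rcases lt_trichotomy ν μ with hνμ | rfl | hμν
  · exact gaussianReal_le_exp_mul_add_of_lt hνμ (le_of_abs_le hd) hε hε1 hδ hδ1 hσ2 s
  · calc gaussianReal ν σ2 s ≤ ENNReal.ofReal (exp ε) * gaussianReal ν σ2 s :=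
          le_mul_of_one_le_left' (by simpa using one_le_exp hε.le)
      _ ≤ _ := le_self_add
  · have hd' : -μ - -ν ≤ Δ := by rw [abs_sub_comm] at hd; linarith [le_of_abs_le hd]
    simpa only [gaussianReal_neg_apply_neg] using
      gaussianReal_le_exp_mul_add_of_lt (neg_lt_neg hμν) hd' hε hε1 hδ hδ1 hσ2 (-s)

end GaussianMechanism

theorem deepset_encoder_gaussian_mechanism_dp_general
    {E : Type*} [NormedAddCommGroup E] [NormedSpace ℝ E]
    {X : Type*} {n : ℕ}
    (φ : X → E) (B : ℝ) (hφ : ∀ x : X, ‖φ x‖ ≤ B)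
    (ψ : E →ₗ[ℝ] ℝ) (L : ℝ) (hL : 0 < L)
    (hψ : ∀ u v : E, ‖ψ u - ψ v‖ ≤ L * ‖u - v‖)
    (g : (Fin n → X) → ℝ)
    (hg : ∀ D : Fin n → X, g D = ψ ((1 / (n : ℝ)) • ∑ i : Fin n, φ (D i)))
    (ε δ : ℝ) (hε : 0 < ε) (hε1 : ε < 1) (hδ : 0 < δ) (hδ1 : δ < 1)
    (σ2 : NNReal)
    (hσ2 : (σ2 : ℝ) = 2 * (2 * L * B / (n : ℝ)) ^ 2 * Real.log (1.25 / δ) / ε ^ 2)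
    (D D' : Fin n → X)
    (hadj : ∃ j : Fin n, ∀ i : Fin n, i ≠ j → D i = D' i)
    (s : Set ℝ) :
    gaussianReal (g D) σ2 s
      ≤ ENNReal.ofReal (Real.exp ε) * gaussianReal (g D') σ2 s
        + ENNReal.ofReal δ := by
  obtain ⟨j, hj⟩ := hadj
  have hsens : |g D - g D'| ≤ 2 * L * B / n := by
    rw [hg, hg, ← Real.norm_eq_abs]
    exact norm_deepSet_sub_le hφ hL.le hψ hj
  exact gaussianReal_le_exp_mul_add hsens hε hε1 hδ hδ1 hσ2 s

/-- Differential privacy for a novel client: the deep-set encoder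
`g(D) = ψ((1/n) • ∑ i, φ (D i))` has sensitivity at most `2LB/n` (Lemma 1), so
releasing the embedding perturbed by Gaussian noise with variance
`σ² = 2 (2LB/n)² log(1.25/δ) / ε²` satisfies `(ε, δ)`-differential privacy:
for adjacent datasets `D, D'` and any measurable `s`,
`N(g(D), σ²)(s) ≤ e^ε · N(g(D'), σ²)(s) + δ`. -/
theorem deepset_encoder_gaussian_mechanism_dp
    {E : Type*} [NormedAddCommGroup E] [NormedSpace ℝ E]
    {X : Type*} {n : ℕ} (hn : 1 ≤ n)
    (φ : X → E) (B : ℝ) (hB : 0 < B) (hφ : ∀ x : X, ‖φ x‖ ≤ B)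
    (ψ : E →ₗ[ℝ] ℝ) (L : ℝ) (hL : 0 < L)
    (hψ : ∀ u v : E, ‖ψ u - ψ v‖ ≤ L * ‖u - v‖)
    (g : (Fin n → X) → ℝ)
    (hg : ∀ D : Fin n → X, g D = ψ ((1 / (n : ℝ)) • ∑ i : Fin n, φ (D i)))
    (ε δ : ℝ) (hε : 0 < ε) (hε1 : ε < 1) (hδ : 0 < δ) (hδ1 : δ < 1)
    (σ2 : NNReal)
    (hσ2 : (σ2 : ℝ) = 2 * (2 * L * B / (n : ℝ)) ^ 2 * Real.log (1.25 / δ) / ε ^ 2)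
    (D D' : Fin n → X)
    (hadj : ∃ j : Fin n, ∀ i : Fin n, i ≠ j → D i = D' i)
    (s : Set ℝ) (hs : MeasurableSet s) :
    gaussianReal (g D) σ2 s
      ≤ ENNReal.ofReal (Real.exp ε) * gaussianReal (g D') σ2 s
        + ENNReal.ofReal δ :=
  deepset_encoder_gaussian_mechanism_dp_general φ B hφ ψ L hL hψ g hg ε δ hε hε1 hδ hδ1 σ2 hσ2 D D'
    hadj s
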